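/- Let n ≥ 1, let 𝕊_n be the symmetric group on n letters and S ⊆ 𝕊_n an inverse-closed subset. Let (π^α)_{α∈A} be a finite family of pairwise non-unitarily-equivalent irreducible unitary representations of 𝕊_n, of dimensions d_α, such that every irreducible unitary representation of 𝕊_n is unitarily equivalent to some π^α. Suppose Φ = (φ_t)_{t∈T'} is a frame for L²(𝕊_n) with the property that every atom φ_t is nonzero and belongs to Z_{π^α,i,λ} for some α ∈ A, 1 ≤ i ≤ d_α, and eigenvalue λ of π^α(S). Then for each α ∈ A, 1 ≤ i ≤ d_α, and eigenvalue λ of π^α(S), the family of vectors {X ∈ E_λ(π^α(S)) : Θ̃_{π^α,i,λ}(X) = φ_t for some t ∈ T' with φ_t ∈ Z_{π^α,i,λ}} is a frame for E_λ(π^α(S)). -/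

import Mathlib

open scoped BigOperators

noncomputable section

/-- A unitary representation of a group `G` of dimension `d`: a group homomorphism from `G`
into the group of `d × d` complex unitary matrices. -/
abbrev URep (G : Type*) [Group G] (d : ℕ) : Type _ :=
  G →* Matrix.unitaryGroup (Fin d) ℂ

/-- A unitary representation is irreducible if its dimension is positive and the only
subspaces `W ⊆ ℂ^d` with `π(g)W ⊆ W` for all `g` are `{0}` and `ℂ^d`. -/
def URepIrreducible {G : Type*} [Group G] {d : ℕ} (π : URep G d) : Prop :=
  0 < d ∧ ∀ W : Submodule ℂ (Fin d → ℂ),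
    (∀ g : G, ∀ ξ ∈ W, ((π g : Matrix (Fin d) (Fin d) ℂ)).mulVec ξ ∈ W) → W = ⊥ ∨ W = ⊤

/-- The coefficient function `π_{j,i}(g) = (π(g))_{i,j}`. -/
def coeff {G : Type*} [Group G] {d : ℕ} (π : URep G d) (j i : Fin d) : G → ℂ :=
  fun g => (π g : Matrix (Fin d) (Fin d) ℂ) i j

/-- The subspace `E_{π,i} = span{π_{j,i} : 1 ≤ j ≤ d}` of `L²(G)`. -/
def Esp {G : Type*} [Group G] {d : ℕ} (π : URep G d) (i : Fin d) : Submodule ℂ (G → ℂ) :=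
  Submodule.span ℂ (Set.range fun j : Fin d => coeff π j i)

/-- Unitary equivalence of two unitary representations: the dimensions agree and there is a
unitary matrix `U` with `U⁻¹ π(g) U = σ(g)` for all `g`. -/
def UEquiv {G : Type*} [Group G] {d d' : ℕ} (π : URep G d) (σ : URep G d') : Prop :=
  ∃ h : d = d', ∃ U : Matrix (Fin d') (Fin d') ℂ, U ∈ Matrix.unitaryGroup (Fin d') ℂ ∧
    ∀ g : G, U⁻¹ * (Matrix.reindex (finCongr h) (finCongr h)
        ((π g : Matrix (Fin d) (Fin d) ℂ))) * U = (σ g : Matrix (Fin d') (Fin d') ℂ)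

/-- `π(S) = ∑_{a ∈ S} π(a)`. -/
def repSum {G : Type*} [Group G] {d : ℕ} (π : URep G d) (S : Finset G) :
    Matrix (Fin d) (Fin d) ℂ :=
  ∑ a ∈ S, (π a : Matrix (Fin d) (Fin d) ℂ)

/-- `X` is a `λ`-eigenvector (possibly zero) of `M`: `M X = λ X`. -/
def IsEigvec {d : ℕ} (M : Matrix (Fin d) (Fin d) ℂ) (lam : ℝ) (X : Fin d → ℂ) : Prop :=
  M.mulVec X = (lam : ℂ) • X

/-- `λ` is an eigenvalue of `M`. -/
def IsEigval {d : ℕ} (M : Matrix (Fin d) (Fin d) ℂ) (lam : ℝ) : Prop :=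
  ∃ X : Fin d → ℂ, X ≠ 0 ∧ IsEigvec M lam X

/-- The `λ`-eigenspace `E_λ(M)` as a submodule of `ℂ^d`. -/
def eigSp {d : ℕ} (M : Matrix (Fin d) (Fin d) ℂ) (lam : ℝ) : Submodule ℂ (Fin d → ℂ) :=
  LinearMap.ker (M.mulVecLin - (lam : ℂ) • LinearMap.id)

/-- The inner product `⟨u, v⟩ = ∑ u(x) conj(v(x))`, linear in the first variable
(the convention of the paper). -/
def dotC {X : Type*} [Fintype X] (u v : X → ℂ) : ℂ :=
  ∑ x, u x * (starRingEnd ℂ) (v x)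

/-- The squared norm `‖u‖² = ∑ |u(x)|²`. -/
def norm2 {X : Type*} [Fintype X] (u : X → ℂ) : ℝ :=
  ∑ x, Complex.normSq (u x)

/-- The map `Θ_{π,i} : X ↦ ∑_k X_k π_{k,i}`. -/
def Theta {G : Type*} [Group G] {d : ℕ} (π : URep G d) (i : Fin d)
    (X : Fin d → ℂ) : G → ℂ :=
  fun g => ∑ k, X k * coeff π k i g

/-- The map `Θ_{π,i}` as a linear map. -/
def ThetaL {G : Type*} [Group G] {d : ℕ} (π : URep G d) (i : Fin d) :
    (Fin d → ℂ) →ₗ[ℂ] (G → ℂ) where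
  toFun X := fun g => ∑ k, X k * coeff π k i g
  map_add' X Y := by
    funext g
    simp [add_mul, Finset.sum_add_distrib]
  map_smul' c X := by
    funext g
    simp [Finset.mul_sum, mul_assoc]

/-- The space `Z_{π,i,λ} = {∑_k X_k π_{k,i} : X ∈ E_λ(π(S))}`. -/
def Zset {G : Type*} [Group G] {d : ℕ} (π : URep G d) (i : Fin d) (lam : ℝ) (S : Finset G) :
    Set (G → ℂ) :=
  {f | ∃ X : Fin d → ℂ, IsEigvec (repSum π S) lam X ∧ f = Theta π i X}

/-- The normalized map `Θ̃_{π,i} = √(d/n!) Θ_{π,i}` for the symmetric group `𝕊_n`. -/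
def ThetaT (n : ℕ) {d : ℕ} (π : URep (Equiv.Perm (Fin n)) d) (i : Fin d)
    (X : Fin d → ℂ) : Equiv.Perm (Fin n) → ℂ :=
  fun g => (Real.sqrt (d / n.factorial) : ℂ) * Theta π i X g

/-- `ψ` is a frame for `W` with lower bound `A` and upper bound `B`:
`A‖v‖² ≤ ∑_t |⟨v, ψ_t⟩|² ≤ B‖v‖²` for all `v ∈ W`. -/
def IsFrameOn {X ι : Type*} [Fintype X] [Fintype ι] (ψ : ι → (X → ℂ)) (W : Set (X → ℂ))
    (A B : ℝ) : Prop :=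
  0 < A ∧ A ≤ B ∧ (∀ t, ψ t ∈ W) ∧
    ∀ v ∈ W, A * norm2 v ≤ ∑ t, Complex.normSq (dotC v (ψ t)) ∧
      ∑ t, Complex.normSq (dotC v (ψ t)) ≤ B * norm2 v

/-- `ψ` is a frame for `W` (for some frame bounds `0 < A ≤ B`). -/
def IsFrameIn {X ι : Type*} [Fintype X] [Fintype ι] (ψ : ι → (X → ℂ)) (W : Set (X → ℂ)) :
    Prop :=
  ∃ A B : ℝ, IsFrameOn ψ W A B

/-!
The Schur orthogonality relations say that the coefficients of pairwise inequivalent irreducible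
unitary representations are orthogonal in `L²(G)` and that `Θ̃_{π,i}` is an isometry from `ℂ^d`
into `L²(G)`. Since `S` is inverse-closed, `π(S)` is Hermitian, so its eigenvectors for distinct
eigenvalues are orthogonal. Hence for `v ∈ E_λ(π^α(S))` the coefficient `⟨Θ̃ v, φ_t⟩` vanishes
unless `φ_t ∈ Z_{π^α,i,λ}`, in which case it equals `⟨v, X_t⟩` for the preimage `X_t` of `φ_t`
under `Θ̃`. The frame inequalities of `Φ` at `Θ̃ v` are then exactly those of `(X_t)` at `v`,
with the same bounds.
-/

open Matrix

/-- `T` has the left inverse `r⁻¹ Tᴴ` and the right inverse `s⁻¹ Tᴴ`, which must agree. -/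
lemma eq_of_conjTranspose_mul_self_eq_smul_one {d d' : ℕ} {T : Matrix (Fin d) (Fin d') ℂ}
    {r s : ℂ} (hr : r ≠ 0) (hs : s ≠ 0) (hTT : Tᴴ * T = r • 1) (hTT' : T * Tᴴ = s • 1) :
    d = d' := by
  have hL : (r⁻¹ • Tᴴ) * T = 1 := by
    rw [Matrix.smul_mul, hTT, smul_smul, inv_mul_cancel₀ hr, one_smul]
  have hR : T * (s⁻¹ • Tᴴ) = 1 := by
    rw [Matrix.mul_smul, hTT', smul_smul, inv_mul_cancel₀ hs, one_smul]
  have hLR : r⁻¹ • Tᴴ = s⁻¹ • Tᴴ := by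
    calc r⁻¹ • Tᴴ = (r⁻¹ • Tᴴ) * (T * (s⁻¹ • Tᴴ)) := by rw [hR, Matrix.mul_one]
      _ = s⁻¹ • Tᴴ := by rw [← Matrix.mul_assoc, hL, Matrix.one_mul]
  simpa using square_of_invertible T _ (hLR ▸ hR) hL

section Schur

variable {G : Type*} [Group G] {d d' d'' : ℕ}

lemma URep.apply_inv (π : URep G d) (g : G) :
    (π g⁻¹ : Matrix (Fin d) (Fin d) ℂ) = (π g : Matrix (Fin d) (Fin d) ℂ)ᴴ := by
  rw [map_inv]; rfl

lemma URep.apply_mul (π : URep G d) (g h : G) :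
    (π (g * h) : Matrix (Fin d) (Fin d) ℂ) = (π g : Matrix (Fin d) (Fin d) ℂ) * π h := by
  rw [map_mul]; rfl

lemma URep.conjTranspose_mul_self (π : URep G d) (g : G) :
    (π g : Matrix (Fin d) (Fin d) ℂ)ᴴ * π g = 1 :=
  mem_unitaryGroup_iff'.1 (π g).2

def Intertwines (π : URep G d) (σ : URep G d') (T : Matrix (Fin d) (Fin d') ℂ) : Prop :=
  ∀ g, (π g : Matrix (Fin d) (Fin d) ℂ) * T = T * (σ g : Matrix (Fin d') (Fin d') ℂ)

namespace Intertwines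

variable {π : URep G d} {σ : URep G d'} {ρ : URep G d''}

lemma mul {T : Matrix (Fin d) (Fin d') ℂ} {T' : Matrix (Fin d') (Fin d'') ℂ}
    (h : Intertwines π σ T) (h' : Intertwines σ ρ T') : Intertwines π ρ (T * T') := fun g => by
  rw [← Matrix.mul_assoc, h g, Matrix.mul_assoc, h' g, Matrix.mul_assoc]

lemma conjTranspose {T : Matrix (Fin d) (Fin d') ℂ} (h : Intertwines π σ T) :
    Intertwines σ π Tᴴ := fun g => by
  have := congrArg Matrix.conjTranspose (h g⁻¹)
  rw [conjTranspose_mul, conjTranspose_mul, URep.apply_inv, URep.apply_inv,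
    conjTranspose_conjTranspose, conjTranspose_conjTranspose] at this
  exact this.symm

lemma smul {T : Matrix (Fin d) (Fin d') ℂ} (h : Intertwines π σ T) (c : ℂ) :
    Intertwines π σ (c • T) := fun g => by
  rw [Matrix.mul_smul, h g, Matrix.smul_mul]

lemma eq_smul_one {C : Matrix (Fin d) (Fin d) ℂ} (hπ : URepIrreducible π)
    (h : Intertwines π π C) : ∃ μ : ℂ, C = μ • 1 := by
  have : Nonempty (Fin d) := Fin.pos_iff_nonempty.mp hπ.1
  obtain ⟨μ, hμ⟩ := Module.End.exists_eigenvalue C.mulVecLin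
  have hinv : ∀ g : G, ∀ ξ ∈ Module.End.eigenspace C.mulVecLin μ,
      (π g : Matrix (Fin d) (Fin d) ℂ) *ᵥ ξ ∈ Module.End.eigenspace C.mulVecLin μ := by
    intro g ξ hξ
    rw [Module.End.mem_eigenspace_iff, mulVecLin_apply] at hξ ⊢
    rw [mulVec_mulVec, ← h g, ← mulVec_mulVec, hξ, mulVec_smul]
  obtain hbot | htop := hπ.2 _ hinv
  · exact absurd hbot hμ
  refine ⟨μ, ext_iff_mulVec.2 fun ξ => ?_⟩
  have hξ := Module.End.mem_eigenspace_iff.1 (htop ▸ Submodule.mem_top : ξ ∈ _)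
  rw [mulVecLin_apply] at hξ
  rw [hξ, smul_mulVec, one_mulVec]

open ComplexOrder in
lemma conjTranspose_mul_self_eq_pos_smul_one {T : Matrix (Fin d) (Fin d') ℂ}
    (hσ : URepIrreducible σ) (h : Intertwines π σ T) (hT : T ≠ 0) :
    ∃ r : ℝ, 0 < r ∧ Tᴴ * T = (r : ℂ) • 1 := by
  obtain ⟨μ, hμ⟩ := h.conjTranspose.mul h |>.eq_smul_one hσ
  have : Nonempty (Fin d') := Fin.pos_iff_nonempty.mp hσ.1
  obtain ⟨j⟩ := ‹Nonempty (Fin d')›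
  have hμ_nonneg : 0 ≤ μ := by
    simpa [hμ] using (posSemidef_conjTranspose_mul_self T).diag_nonneg (i := j)
  have hμ_ne : μ ≠ 0 := by
    rintro rfl
    exact hT (conjTranspose_mul_self_eq_zero.1 (by simpa using hμ))
  obtain ⟨hre, him⟩ := Complex.nonneg_iff.1 hμ_nonneg
  refine ⟨μ.re, lt_of_le_of_ne hre fun h0 => hμ_ne (Complex.ext h0.symm him.symm), ?_⟩
  rw [hμ, ← Complex.re_add_im μ, ← him]
  simp

lemma uEquiv_of_mem_unitaryGroup {π σ : URep G d} {U : Matrix (Fin d) (Fin d) ℂ}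
    (h : Intertwines π σ U) (hU : U ∈ unitaryGroup (Fin d) ℂ) : UEquiv π σ := by
  have hUU := mem_unitaryGroup_iff'.1 hU
  refine ⟨rfl, U, hU, fun g => ?_⟩
  rw [finCongr_refl, reindex_refl_refl, inv_eq_left_inv hUU, Matrix.mul_assoc, h g,
    ← Matrix.mul_assoc, hUU, Matrix.one_mul]

/-- A nonzero intertwiner between irreducibles is invertible, and rescaling it gives a unitary
one, because `TᴴT` is a positive multiple of `1` by Schur's lemma. -/
lemma eq_zero_or_uEquiv {T : Matrix (Fin d) (Fin d') ℂ} (hπ : URepIrreducible π)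
    (hσ : URepIrreducible σ) (h : Intertwines π σ T) : T = 0 ∨ UEquiv π σ := by
  by_cases hT : T = 0
  · exact .inl hT
  right
  obtain ⟨r, hr, hTT⟩ := h.conjTranspose_mul_self_eq_pos_smul_one hσ hT
  obtain ⟨s, hs, hTT'⟩ := h.conjTranspose.conjTranspose_mul_self_eq_pos_smul_one hπ
    (by rwa [Ne, conjTranspose_eq_zero])
  rw [conjTranspose_conjTranspose] at hTT'
  obtain rfl := eq_of_conjTranspose_mul_self_eq_smul_one (by exact_mod_cast hr.ne')
    (by exact_mod_cast hs.ne') hTT hTT'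
  have hc : (√r)⁻¹ * (√r)⁻¹ * r = 1 := by
    rw [← mul_inv, Real.mul_self_sqrt hr.le, inv_mul_cancel₀ hr.ne']
  refine (h.smul _).uEquiv_of_mem_unitaryGroup (U := (((√r)⁻¹ : ℝ) : ℂ) • T) ?_
  rw [mem_unitaryGroup_iff', star_eq_conjTranspose, conjTranspose_smul, Matrix.smul_mul,
    Matrix.mul_smul, hTT, smul_smul, smul_smul, Complex.star_def, Complex.conj_ofReal,
    ← Complex.ofReal_mul, ← Complex.ofReal_mul, hc, Complex.ofReal_one, one_smul]

end Intertwines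

end Schur

section Orthogonality

variable {G : Type*} [Group G] [Fintype G] {d d' : ℕ}

def intertwinerAvg (π : URep G d) (σ : URep G d') (B : Matrix (Fin d) (Fin d') ℂ) :
    Matrix (Fin d) (Fin d') ℂ :=
  ∑ g, (π g : Matrix (Fin d) (Fin d) ℂ) * B * (σ g : Matrix (Fin d') (Fin d') ℂ)ᴴ

lemma intertwines_intertwinerAvg (π : URep G d) (σ : URep G d') (B : Matrix (Fin d) (Fin d') ℂ) :
    Intertwines π σ (intertwinerAvg π σ B) := fun h => by
  rw [intertwinerAvg, Matrix.mul_sum, Matrix.sum_mul]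
  refine Fintype.sum_equiv (Equiv.mulLeft h) _ _ fun g => ?_
  rw [Equiv.coe_mulLeft, URep.apply_mul, URep.apply_mul, conjTranspose_mul]
  simp only [Matrix.mul_assoc, URep.conjTranspose_mul_self, Matrix.mul_one]

lemma intertwinerAvg_eq_zero {π : URep G d} {σ : URep G d'} (hπ : URepIrreducible π)
    (hσ : URepIrreducible σ) (hne : ¬ UEquiv π σ) (B : Matrix (Fin d) (Fin d') ℂ) :
    intertwinerAvg π σ B = 0 :=
  ((intertwines_intertwinerAvg π σ B).eq_zero_or_uEquiv hπ hσ).resolve_right hne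

lemma intertwinerAvg_self {π : URep G d} (hπ : URepIrreducible π)
    (B : Matrix (Fin d) (Fin d) ℂ) :
    intertwinerAvg π π B = ((Fintype.card G : ℂ) / d * trace B) • 1 := by
  obtain ⟨μ, hμ⟩ := (intertwines_intertwinerAvg π π B).eq_smul_one hπ
  have htrace : trace (intertwinerAvg π π B) = Fintype.card G * trace B := by
    simp [intertwinerAvg, trace_sum, trace_mul_cycle _ B, URep.conjTranspose_mul_self]
  have hd : (d : ℂ) ≠ 0 := by exact_mod_cast hπ.1.ne'
  rw [hμ, trace_smul, trace_one, Fintype.card_fin, smul_eq_mul] at htrace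
  rw [hμ, div_mul_eq_mul_div, ← htrace, mul_div_cancel_right₀ _ hd]

end Orthogonality

section InnerProducts

variable {G : Type*} [Group G] [Fintype G] {d d' : ℕ}

lemma dotC_eq_dotProduct {X : Type*} [Fintype X] (u v : X → ℂ) : dotC u v = u ⬝ᵥ star v := rfl

lemma dotC_smul_left {X : Type*} [Fintype X] (a : ℂ) (u v : X → ℂ) :
    dotC (a • u) v = a * dotC u v := by
  simp only [dotC_eq_dotProduct, smul_dotProduct, smul_eq_mul]

lemma dotC_smul_right {X : Type*} [Fintype X] (a : ℂ) (u v : X → ℂ) :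
    dotC u (a • v) = star a * dotC u v := by
  simp only [dotC_eq_dotProduct, star_smul, dotProduct_smul, smul_eq_mul]

lemma dotC_zero_right {X : Type*} [Fintype X] (u : X → ℂ) : dotC u 0 = 0 := by
  simp [dotC_eq_dotProduct]

lemma dotC_self {X : Type*} [Fintype X] (u : X → ℂ) : dotC u u = norm2 u := by
  simp only [dotC, norm2, Complex.ofReal_sum, Complex.mul_conj]

lemma dotC_Theta_Theta (π : URep G d) (σ : URep G d') (i : Fin d) (j : Fin d')
    (v : Fin d → ℂ) (w : Fin d' → ℂ) :
    dotC (Theta π i v) (Theta σ j w) = intertwinerAvg π σ (vecMulVec v (star w)) i j := by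
  simp only [dotC, Theta, coeff, intertwinerAvg, Matrix.sum_apply, mul_apply, vecMulVec_apply,
    conjTranspose_apply, map_sum, map_mul, Finset.sum_mul, Finset.mul_sum, Pi.star_apply]
  refine Finset.sum_congr rfl fun g _ => Finset.sum_congr rfl fun l _ =>
    Finset.sum_congr rfl fun k _ => ?_
  rw [Complex.star_def]
  ring

lemma dotC_Theta_Theta_of_not_uEquiv {π : URep G d} {σ : URep G d'} (hπ : URepIrreducible π)
    (hσ : URepIrreducible σ) (hne : ¬ UEquiv π σ) (i : Fin d) (j : Fin d')
    (v : Fin d → ℂ) (w : Fin d' → ℂ) : dotC (Theta π i v) (Theta σ j w) = 0 := by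
  rw [dotC_Theta_Theta, intertwinerAvg_eq_zero hπ hσ hne]
  rfl

lemma dotC_Theta_Theta_self {π : URep G d} (hπ : URepIrreducible π) (i j : Fin d)
    (v w : Fin d → ℂ) :
    dotC (Theta π i v) (Theta π j w) =
      if i = j then (Fintype.card G : ℂ) / d * dotC v w else 0 := by
  rw [dotC_Theta_Theta, intertwinerAvg_self hπ, trace_vecMulVec, ← dotC_eq_dotProduct,
    Matrix.smul_apply, one_apply, smul_eq_mul, mul_ite, mul_one, mul_zero]

end InnerProducts

section Eigenvectors

variable {d : ℕ}

lemma IsEigvec.smul {M : Matrix (Fin d) (Fin d) ℂ} {lam : ℝ} {X : Fin d → ℂ}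
    (h : IsEigvec M lam X) (a : ℂ) : IsEigvec M lam (a • X) := by
  rw [IsEigvec, mulVec_smul, h, smul_comm]

lemma isEigvec_zero (M : Matrix (Fin d) (Fin d) ℂ) (lam : ℝ) : IsEigvec M lam 0 := by
  simp [IsEigvec]

lemma repSum_isHermitian {G : Type*} [Group G] (π : URep G d) {S : Finset G}
    (hS : ∀ s ∈ S, s⁻¹ ∈ S) : (repSum π S).IsHermitian := by
  rw [IsHermitian, repSum, conjTranspose_sum]
  refine Finset.sum_nbij' (·⁻¹) (·⁻¹) hS hS (fun s _ => inv_inv s) (fun s _ => inv_inv s)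
    fun s _ => ?_
  rw [URep.apply_inv]

lemma dotC_mulVec_left {M : Matrix (Fin d) (Fin d) ℂ} (hM : M.IsHermitian) (v w : Fin d → ℂ) :
    dotC (M *ᵥ v) w = dotC v (M *ᵥ w) := by
  rw [dotC_eq_dotProduct, dotC_eq_dotProduct, star_mulVec, hM, dotProduct_comm v,
    ← dotProduct_mulVec, dotProduct_comm]

lemma dotC_eq_zero_of_isEigvec {M : Matrix (Fin d) (Fin d) ℂ} (hM : M.IsHermitian)
    {lam mu : ℝ} (hne : lam ≠ mu) {v w : Fin d → ℂ} (hv : IsEigvec M lam v)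
    (hw : IsEigvec M mu w) : dotC v w = 0 := by
  have h : (lam : ℂ) * dotC v w = mu * dotC v w := by
    rw [← dotC_smul_left, ← hv, dotC_mulVec_left hM, hw, dotC_smul_right, Complex.star_def,
      Complex.conj_ofReal]
  exact (mul_eq_mul_right_iff.1 h).resolve_left (by exact_mod_cast hne)

end Eigenvectors

lemma dotC_Theta_eq_zero_of_notMem_Zset {G : Type*} [Group G] [Fintype G] {A : Type*}
    {d : A → ℕ} {π : ∀ α, URep G (d α)} (hirr : ∀ α, URepIrreducible (π α))
    (hpair : ∀ α β, α ≠ β → ¬ UEquiv (π α) (π β)) {S : Finset G} (hS : ∀ s ∈ S, s⁻¹ ∈ S)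
    {α β : A} {i : Fin (d α)} {j : Fin (d β)} {lam mu : ℝ} {v : Fin (d α) → ℂ} {f : G → ℂ}
    (hv : IsEigvec (repSum (π α) S) lam v) (hf : f ∈ Zset (π β) j mu S)
    (hf' : f ∉ Zset (π α) i lam S) : dotC (Theta (π α) i v) f = 0 := by
  obtain ⟨w, hw, rfl⟩ := hf
  by_cases hαβ : α = β
  · subst hαβ
    rw [dotC_Theta_Theta_self (hirr α)]
    split_ifs with hij
    · subst hij
      have hmu : lam ≠ mu := by
        rintro rfl
        exact hf' ⟨w, hw, rfl⟩
      rw [dotC_eq_zero_of_isEigvec (repSum_isHermitian _ hS) hmu hv hw, mul_zero]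
    · rfl
  · exact dotC_Theta_Theta_of_not_uEquiv (hirr α) (hirr β) (hpair α β hαβ) i j v w

lemma Theta_smul {G : Type*} [Group G] {d : ℕ} (π : URep G d) (i : Fin d) (a : ℂ)
    (X : Fin d → ℂ) : Theta π i (a • X) = a • Theta π i X :=
  (ThetaL π i).map_smul a X

section Normalized

variable {n d : ℕ} {π : URep (Equiv.Perm (Fin n)) d} {i : Fin d}

lemma ThetaT_eq_smul (X : Fin d → ℂ) :
    ThetaT n π i X = (√(d / n.factorial : ℝ) : ℂ) • Theta π i X := rfl

/-- The normalization `√(d/n!)` cancels the factor `n!/d` of the orthogonality relations. -/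
lemma dotC_ThetaT_ThetaT (hπ : URepIrreducible π) (v w : Fin d → ℂ) :
    dotC (ThetaT n π i v) (ThetaT n π i w) = dotC v w := by
  have hd : (d : ℂ) ≠ 0 := by exact_mod_cast hπ.1.ne'
  have hn : (n.factorial : ℂ) ≠ 0 := Nat.cast_ne_zero.2 n.factorial_ne_zero
  have hc : √(d / n.factorial : ℝ) * √(d / n.factorial : ℝ) = d / n.factorial :=
    Real.mul_self_sqrt (by positivity)
  rw [ThetaT_eq_smul, ThetaT_eq_smul, dotC_smul_left, dotC_smul_right,
    dotC_Theta_Theta_self hπ, if_pos rfl, Fintype.card_perm, Fintype.card_fin, Complex.star_def,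
    Complex.conj_ofReal, ← mul_assoc, ← mul_assoc, ← Complex.ofReal_mul, hc]
  push_cast
  field_simp

lemma norm2_ThetaT (hπ : URepIrreducible π) (v : Fin d → ℂ) :
    norm2 (ThetaT n π i v) = norm2 v := by
  exact_mod_cast (dotC_self _).symm.trans ((dotC_ThetaT_ThetaT hπ v v).trans (dotC_self v))

lemma exists_ThetaT_eq_of_mem_Zset (hd : 0 < d) {lam : ℝ} {S : Finset (Equiv.Perm (Fin n))}
    {f : Equiv.Perm (Fin n) → ℂ} (hf : f ∈ Zset π i lam S) :
    ∃ X, IsEigvec (repSum π S) lam X ∧ ThetaT n π i X = f := by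
  obtain ⟨Y, hY, rfl⟩ := hf
  have hc : (√(d / n.factorial : ℝ) : ℂ) ≠ 0 := by
    exact_mod_cast (Real.sqrt_pos.2 (by positivity)).ne'
  refine ⟨(√(d / n.factorial : ℝ) : ℂ)⁻¹ • Y, hY.smul _, ?_⟩
  rw [ThetaT_eq_smul, Theta_smul, smul_smul, mul_inv_cancel₀ hc, one_smul]

end Normalized

lemma IsFrameOn.of_dotC_eq {X Y ι : Type*} [Fintype X] [Fintype Y] [Fintype ι]
    {ψ : ι → X → ℂ} {V : Set (X → ℂ)} {χ : ι → Y → ℂ} {W : Set (Y → ℂ)} {A B : ℝ}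
    (hψ : IsFrameOn ψ V A B) (T : (Y → ℂ) → X → ℂ) (hχ : ∀ t, χ t ∈ W) (hT : Set.MapsTo T W V)
    (hnorm : ∀ v ∈ W, norm2 (T v) = norm2 v)
    (hdot : ∀ v ∈ W, ∀ t, dotC (T v) (ψ t) = dotC v (χ t)) : IsFrameOn χ W A B := by
  obtain ⟨hA, hAB, -, hbounds⟩ := hψ
  refine ⟨hA, hAB, hχ, fun v hv => ?_⟩
  simpa only [hnorm v hv, hdot v hv] using hbounds (T v) (hT hv)

theorem stmt15_general {n : ℕ} (S : Finset (Equiv.Perm (Fin n)))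
    (hS : ∀ s ∈ S, s⁻¹ ∈ S) {A : Type*} {d : A → ℕ}
    (π : ∀ α : A, URep (Equiv.Perm (Fin n)) (d α))
    (hirr : ∀ α, URepIrreducible (π α))
    (hpair : ∀ α β, α ≠ β → ¬ UEquiv (π α) (π β))
    {T' : Type*} [Fintype T'] (φ : T' → (Equiv.Perm (Fin n) → ℂ))
    (hframe : IsFrameIn φ Set.univ)
    (hatom : ∀ t : T', φ t ≠ 0 ∧ ∃ (α : A) (i : Fin (d α)) (lam : ℝ),
        IsEigval (repSum (π α) S) lam ∧ φ t ∈ Zset (π α) i lam S) :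
    ∀ (α : A) (i : Fin (d α)) (lam : ℝ), IsEigval (repSum (π α) S) lam →
      ∃ X : T' → (Fin (d α) → ℂ),
        (∀ t, IsEigvec (repSum (π α) S) lam (X t)) ∧
        (∀ t, φ t ∈ Zset (π α) i lam S → ThetaT n (π α) i (X t) = φ t) ∧
        (∀ t, φ t ∉ Zset (π α) i lam S → X t = 0) ∧
        IsFrameIn X {v | IsEigvec (repSum (π α) S) lam v} := by
  intro α i lam _
  have hX : ∀ t, ∃ X, IsEigvec (repSum (π α) S) lam X ∧
      (φ t ∈ Zset (π α) i lam S → ThetaT n (π α) i X = φ t) ∧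
      (φ t ∉ Zset (π α) i lam S → X = 0) := by
    intro t
    by_cases ht : φ t ∈ Zset (π α) i lam S
    · obtain ⟨X, hX, hXφ⟩ := exists_ThetaT_eq_of_mem_Zset (hirr α).1 ht
      exact ⟨X, hX, fun _ => hXφ, fun h => absurd ht h⟩
    · exact ⟨0, isEigvec_zero _ _, fun h => absurd h ht, fun _ => rfl⟩
  choose X hXeig hXφ hX0 using hX
  have hdot : ∀ v ∈ {v | IsEigvec (repSum (π α) S) lam v}, ∀ t,
      dotC (ThetaT n (π α) i v) (φ t) = dotC v (X t) := by
    intro v hv t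
    by_cases ht : φ t ∈ Zset (π α) i lam S
    · rw [← hXφ t ht, dotC_ThetaT_ThetaT (hirr α)]
    · obtain ⟨-, β, j, mu, -, hβ⟩ := hatom t
      rw [hX0 t ht, dotC_zero_right, ThetaT_eq_smul, dotC_smul_left,
        dotC_Theta_eq_zero_of_notMem_Zset hirr hpair hS hv hβ ht, mul_zero]
  obtain ⟨A₀, B₀, hφ⟩ := hframe
  exact ⟨X, hXeig, hXφ, hX0, A₀, B₀, hφ.of_dotC_eq _ hXeig (Set.mapsTo_univ _ _)
    (fun v _ => norm2_ThetaT (hirr α) v) hdot⟩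

/-- If `Φ = (φ_t)` is a frame for `L²(𝕊_n)` whose atoms are nonzero and each
belongs to some `Z_{π^α,i,λ}` (with `λ` an eigenvalue of `π^α(S)`), then for each `α`, `i`
and eigenvalue `λ` of `π^α(S)`, the family of vectors `X ∈ E_λ(π^α(S))` with
`Θ̃_{π^α,i,λ}(X) = φ_t` for some `t` with `φ_t ∈ Z_{π^α,i,λ}` is a frame for `E_λ(π^α(S))`. -/
theorem stmt15 {n : ℕ} (hn : 1 ≤ n) (S : Finset (Equiv.Perm (Fin n)))
    (hS : ∀ s ∈ S, s⁻¹ ∈ S) {A : Type*} [Fintype A] {d : A → ℕ}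
    (π : ∀ α : A, URep (Equiv.Perm (Fin n)) (d α))
    (hirr : ∀ α, URepIrreducible (π α))
    (hpair : ∀ α β, α ≠ β → ¬ UEquiv (π α) (π β))
    (hcomplete : ∀ (d' : ℕ) (σ : URep (Equiv.Perm (Fin n)) d'),
        URepIrreducible σ → ∃ α, UEquiv σ (π α))
    {T' : Type*} [Fintype T'] (φ : T' → (Equiv.Perm (Fin n) → ℂ))
    (hframe : IsFrameIn φ Set.univ)
    (hatom : ∀ t : T', φ t ≠ 0 ∧ ∃ (α : A) (i : Fin (d α)) (lam : ℝ),
        IsEigval (repSum (π α) S) lam ∧ φ t ∈ Zset (π α) i lam S) :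
    ∀ (α : A) (i : Fin (d α)) (lam : ℝ), IsEigval (repSum (π α) S) lam →
      ∃ X : T' → (Fin (d α) → ℂ),
        (∀ t, IsEigvec (repSum (π α) S) lam (X t)) ∧
        (∀ t, φ t ∈ Zset (π α) i lam S → ThetaT n (π α) i (X t) = φ t) ∧
        (∀ t, φ t ∉ Zset (π α) i lam S → X t = 0) ∧
        IsFrameIn X {v | IsEigvec (repSum (π α) S) lam v} :=
  stmt15_general S hS π hirr hpair φ hframe hatom
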